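/- arXiv:1804.08104 — 3 statements merged into one kernel-verified Lean document; each statement's English description precedes it below -/
import Mathlib

section
/- Let E be a real inner product space, V : E → ℝ bounded from below, and let ∇̄V : E × E → E satisfy ⟨∇̄V(u,v), v − u⟩ = V(v) − V(u) for all u, v ∈ E. Suppose a sequence (uᵏ) and step sizes τ_k with 0 < τ_min ≤ τ_k ≤ τ_max satisfy u^{k+1} = uᵏ − τ_k ∇̄V(uᵏ, u^{k+1}) for all k. Then, with V* = lim_{k→∞} V(uᵏ) (which exists), the following summability bounds hold: Σ_{k=0}^∞ ‖∇̄V(uᵏ, u^{k+1})‖² ≤ (V(u⁰) − V*)/τ_min and Σ_{k=0}^∞ ‖u^{k+1} − uᵏ‖² ≤ τ_max (V(u⁰) − V*). -/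
open scoped RealInnerProductSpace

/-- **Summability estimates for the discrete gradient scheme (from the proof of
Theorem 3.4, Euclidean instance).** With `V` bounded below, the limit
`V* = lim V(uᵏ)` exists and
`Σ ‖∇̄V(uᵏ,u^{k+1})‖² ≤ (V(u⁰) − V*)/τ_min`,
`Σ ‖u^{k+1} − uᵏ‖² ≤ τ_max (V(u⁰) − V*)`. -/
theorem discrete_gradient_scheme_summability
    {E : Type*} [NormedAddCommGroup E] [InnerProductSpace ℝ E]
    (V : E → ℝ) (hVbd : BddBelow (Set.range V))
    (DG : E → E → E)
    (hDG : ∀ u v : E, ⟪DG u v, v - u⟫ = V v - V u)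
    (u : ℕ → E) (τ : ℕ → ℝ) (τmin τmax : ℝ) (hτmin : 0 < τmin)
    (hτ : ∀ k, τmin ≤ τ k ∧ τ k ≤ τmax)
    (hscheme : ∀ k, u (k + 1) = u k - τ k • DG (u k) (u (k + 1))) :
    ∃ Vstar : ℝ, Filter.Tendsto (fun k => V (u k)) Filter.atTop (nhds Vstar) ∧
      Summable (fun k : ℕ => ‖DG (u k) (u (k + 1))‖ ^ 2) ∧
      (∑' k : ℕ, ‖DG (u k) (u (k + 1))‖ ^ 2) ≤ (V (u 0) - Vstar) / τmin ∧
      Summable (fun k : ℕ => ‖u (k + 1) - u k‖ ^ 2) ∧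
      (∑' k : ℕ, ‖u (k + 1) - u k‖ ^ 2) ≤ τmax * (V (u 0) - Vstar) := by
  obtain ⟨m, hm⟩ := hVbd
  set g : ℕ → ℝ := fun k => ‖DG (u k) (u (k + 1))‖ ^ 2 with hg
  set d : ℕ → ℝ := fun k => V (u k) - V (u (k + 1)) with hd
  have hτpos : ∀ k, 0 < τ k := fun k => lt_of_lt_of_le hτmin (hτ k).1
  have hτmaxpos : 0 < τmax := lt_of_lt_of_le (hτpos 0) (hτ 0).2
  have key : ∀ k, d k = τ k * g k := by
    intro k
    have h1 := hDG (u k) (u (k + 1))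
    have h2 : u (k + 1) - u k = -(τ k • DG (u k) (u (k + 1))) := by
      nth_rewrite 1 [hscheme k]; abel
    rw [h2, inner_neg_right, real_inner_smul_right,
      real_inner_self_eq_norm_sq] at h1
    simp only [hd, hg]
    linarith
  have hgnn : ∀ k, 0 ≤ g k := fun k => sq_nonneg _
  have hdnn : ∀ k, 0 ≤ d k := fun k => (key k) ▸ mul_nonneg (hτpos k).le (hgnn k)
  have hanti : Antitone (fun k => V (u k)) :=
    antitone_nat_of_succ_le (fun k => by have := hdnn k; simp only [hd] at this; linarith)
  have hbdd : BddBelow (Set.range fun k => V (u k)) :=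
    ⟨m, by rintro x ⟨k, rfl⟩; exact hm ⟨u k, rfl⟩⟩
  have hconv := tendsto_atTop_ciInf hanti hbdd
  set Vstar : ℝ := ⨅ k, V (u k) with hVs
  refine ⟨Vstar, hconv, ?_⟩
  -- HasSum for d
  have hdsum : HasSum d (V (u 0) - Vstar) := by
    rw [hasSum_iff_tendsto_nat_of_nonneg hdnn]
    have : ∀ n, ∑ i ∈ Finset.range n, d i = V (u 0) - V (u n) := by
      intro n; simpa [hd] using Finset.sum_range_sub' (fun k => V (u k)) n
    simp only [this]
    exact (tendsto_const_nhds).sub hconv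
  -- norm of step
  have snorm : ∀ k, ‖u (k + 1) - u k‖ ^ 2 = τ k * d k := by
    intro k
    have h2 : u (k + 1) - u k = -(τ k • DG (u k) (u (k + 1))) := by
      nth_rewrite 1 [hscheme k]; abel
    rw [h2, norm_neg, norm_smul, mul_pow, key k]
    simp [Real.norm_eq_abs, sq_abs, hg]
    ring
  have hg_le : ∀ k, g k ≤ d k / τmin := by
    intro k
    rw [le_div_iff₀ hτmin, key k]
    nlinarith [(hτ k).1, hgnn k]
  have hsum_dτ : Summable (fun k => d k / τmin) := hdsum.summable.div_const _
  have hgsum : Summable g := Summable.of_nonneg_of_le hgnn hg_le hsum_dτ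
  have hs_le : ∀ k, ‖u (k + 1) - u k‖ ^ 2 ≤ τmax * d k := by
    intro k
    rw [snorm k]
    exact mul_le_mul_of_nonneg_right (hτ k).2 (hdnn k)
  have hssum : Summable (fun k : ℕ => ‖u (k + 1) - u k‖ ^ 2) :=
    Summable.of_nonneg_of_le (fun k => sq_nonneg _) hs_le
      (hdsum.summable.mul_left τmax)
  refine ⟨hgsum, ?_, hssum, ?_⟩
  · calc ∑' k, g k ≤ ∑' k, d k / τmin := Summable.tsum_le_tsum hg_le hgsum hsum_dτ
      _ = (V (u 0) - Vstar) / τmin := by rw [tsum_div_const, hdsum.tsum_eq]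
  · calc ∑' k, ‖u (k + 1) - u k‖ ^ 2 ≤ ∑' k, τmax * d k :=
        Summable.tsum_le_tsum hs_le hssum (hdsum.summable.mul_left τmax)
      _ = τmax * (V (u 0) - Vstar) := by rw [tsum_mul_left, hdsum.tsum_eq]
end

section
/- Let E be a real inner product space, V : E → ℝ bounded from below, and let ∇̄V : E × E → E satisfy ⟨∇̄V(u,v), v − u⟩ = V(v) − V(u) for all u, v ∈ E. Suppose a sequence (uᵏ) and step sizes τ_k with 0 < τ_min ≤ τ_k ≤ τ_max satisfy u^{k+1} = uᵏ − τ_k ∇̄V(uᵏ, u^{k+1}) for all k. Then ‖∇̄V(uᵏ, u^{k+1})‖ → 0 and ‖u^{k+1} − uᵏ‖ → 0 as k → ∞. -/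
open scoped RealInnerProductSpace

/-- **Vanishing of increments for the discrete gradient scheme (from the proof
of Theorem 3.4, Euclidean instance).** With `V` bounded below,
`‖∇̄V(uᵏ, u^{k+1})‖ → 0` and `‖u^{k+1} − uᵏ‖ → 0`. -/
theorem discrete_gradient_scheme_increments_vanish
    {E : Type*} [NormedAddCommGroup E] [InnerProductSpace ℝ E]
    (V : E → ℝ) (hVbd : BddBelow (Set.range V))
    (DG : E → E → E)
    (hDG : ∀ u v : E, ⟪DG u v, v - u⟫ = V v - V u)
    (u : ℕ → E) (τ : ℕ → ℝ) (τmin τmax : ℝ) (hτmin : 0 < τmin)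
    (hτ : ∀ k, τmin ≤ τ k ∧ τ k ≤ τmax)
    (hscheme : ∀ k, u (k + 1) = u k - τ k • DG (u k) (u (k + 1))) :
    Filter.Tendsto (fun k => ‖DG (u k) (u (k + 1))‖) Filter.atTop (nhds 0) ∧
    Filter.Tendsto (fun k => ‖u (k + 1) - u k‖) Filter.atTop (nhds 0) := by
  have hdiff : ∀ k, u (k + 1) - u k = -(τ k • DG (u k) (u (k + 1))) := by
    intro k; nth_rewrite 1 [hscheme k]; abel
  have hkey : ∀ k, V (u k) - V (u (k + 1)) = τ k * ‖DG (u k) (u (k + 1))‖ ^ 2 := by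
    intro k
    have h := hDG (u k) (u (k + 1))
    rw [hdiff k, inner_neg_right, real_inner_smul_right,
      real_inner_self_eq_norm_sq] at h
    linarith
  have hτpos : ∀ k, 0 < τ k := fun k => lt_of_lt_of_le hτmin (hτ k).1
  -- V ∘ u is antitone
  have hmono : Antitone (fun k => V (u k)) := by
    apply antitone_nat_of_succ_le
    intro k
    have := hkey k
    nlinarith [sq_nonneg ‖DG (u k) (u (k + 1))‖, hτpos k]
  have hbd : BddBelow (Set.range fun k => V (u k)) := by
    obtain ⟨c, hc⟩ := hVbd
    exact ⟨c, fun x ⟨k, hk⟩ => hk ▸ hc ⟨u k, rfl⟩⟩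
  have hconv : Filter.Tendsto (fun k => V (u k)) Filter.atTop
      (nhds (⨅ k, V (u k))) := tendsto_atTop_ciInf hmono hbd
  have hsucc : Filter.Tendsto (fun k => V (u (k + 1))) Filter.atTop
      (nhds (⨅ k, V (u k))) := hconv.comp (Filter.tendsto_add_atTop_nat 1)
  have hdiff0 : Filter.Tendsto (fun k => V (u k) - V (u (k + 1))) Filter.atTop
      (nhds 0) := by
    have := hconv.sub hsucc
    simpa using this
  have hsq0 : Filter.Tendsto (fun k => ‖DG (u k) (u (k + 1))‖ ^ 2)
      Filter.atTop (nhds 0) := by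
    apply squeeze_zero (fun k => sq_nonneg _) (fun k => ?_)
      (by simpa using hdiff0.const_mul (τmin⁻¹))
    rw [hkey k]
    rw [inv_mul_eq_div, le_div_iff₀ hτmin, mul_comm]
    have := sq_nonneg ‖DG (u k) (u (k + 1))‖
    nlinarith [(hτ k).1]
  have hDG0 : Filter.Tendsto (fun k => ‖DG (u k) (u (k + 1))‖) Filter.atTop
      (nhds 0) := by
    have := hsq0.sqrt
    simp only [Real.sqrt_zero] at this
    convert this using 2 with k
    rw [Real.sqrt_sq (norm_nonneg _)]
  refine ⟨hDG0, ?_⟩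
  have heq : ∀ k, ‖u (k + 1) - u k‖ = τ k * ‖DG (u k) (u (k + 1))‖ := by
    intro k
    rw [hdiff k, norm_neg, norm_smul, Real.norm_eq_abs,
      abs_of_pos (hτpos k)]
  apply squeeze_zero (fun k => norm_nonneg _) (fun k => ?_)
    (by simpa using hDG0.const_mul τmax)
  rw [heq k]
  exact mul_le_mul_of_nonneg_right (hτ k).2 (norm_nonneg _)
end

section
/- Let V : ℝⁿ → ℝ be continuously differentiable, bounded from below, and coercive (i.e. V(uᵏ) → ∞ whenever ‖uᵏ‖ → ∞). Let ∇̄V : ℝⁿ × ℝⁿ → ℝⁿ be continuous and satisfy ⟨∇̄V(u,v), v − u⟩ = V(v) − V(u) and ∇̄V(u,u) = ∇V(u) for all u, v ∈ ℝⁿ. Suppose a sequence (uᵏ) and step sizes τ_k with 0 < τ_min ≤ τ_k ≤ τ_max satisfy u^{k+1} = uᵏ − τ_k ∇̄V(uᵏ, u^{k+1}) for all k. Then lim_{k→∞} ∇̄V(uᵏ, u^{k+1}) = 0 and lim_{k→∞} ∇V(uᵏ) = 0; moreover the sequence (uᵏ) has at least one accumulation point, and every accumulation point u* satisfies ∇V(u*)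 = 0. -/
/-!
Along the scheme the energy drops by exactly `τ_k ‖∇̄V(uᵏ, u^{k+1})‖²` per step, so, `V`
being bounded below, these drops tend to zero, and hence so do the discrete gradients and the
steps `u^{k+1} - uᵏ`. Since the energy never increases, coercivity confines the iterates to a
bounded set, which in finite dimensions yields cluster points. At a cluster point `u*` the pairs
`(uᵏ, u^{k+1})` cluster at `(u*, u*)`, so continuity of `∇̄V` gives `∇V(u*) = ∇̄V(u*, u*) = 0`;
and a bounded sequence all of whose cluster points are zeros of the continuous map
`x ↦ ∇̄V(x, x) = ∇V(x)` is mapped by it to a null sequence.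
-/

open scoped RealInnerProductSpace

open Filter Topology Set Bornology

theorem tendsto_sub_succ_of_antitone {a : ℕ → ℝ} (ha : Antitone a) (hbdd : BddBelow (range a)) :
    Tendsto (fun k => a k - a (k + 1)) atTop (𝓝 0) := by
  have hlim := tendsto_atTop_ciInf ha hbdd
  simpa using hlim.sub (hlim.comp (tendsto_add_atTop_nat 1))

theorem isBounded_range_of_coercive {E : Type*} [SeminormedAddCommGroup E] {V : E → ℝ}
    (hcoercive : ∀ u : ℕ → E, Tendsto (fun k => ‖u k‖) atTop atTop →
      Tendsto (fun k => V (u k)) atTop atTop)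
    {u : ℕ → E} (hVu : BddAbove (range (V ∘ u))) : IsBounded (range u) := by
  by_contra hunb
  have hlarge : ∀ m : ℕ, ∃ k, (m : ℝ) < ‖u k‖ := fun m => by
    simp only [isBounded_iff_forall_norm_le, forall_mem_range, not_exists, not_forall,
      not_le] at hunb
    exact hunb m
  choose φ hφ using hlarge
  have hVφ := hcoercive (u ∘ φ)
    (tendsto_atTop_mono (fun m => (hφ m).le) tendsto_natCast_atTop_atTop)
  obtain ⟨C, hC⟩ := hVu
  obtain ⟨m, hm⟩ := (hVφ.eventually_gt_atTop C).exists
  exact (hC (mem_range_self (φ m))).not_gt hm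

theorem tendsto_comp_of_forall_mapClusterPt {X Y : Type*} [PseudoMetricSpace X] [ProperSpace X]
    [TopologicalSpace Y] {u : ℕ → X} (hu : IsBounded (range u)) {f : X → Y} (hf : Continuous f)
    {y : Y} (hy : ∀ x, MapClusterPt x atTop u → f x = y) : Tendsto (f ∘ u) atTop (𝓝 y) := by
  refine tendsto_of_subseq_tendsto fun ns hns => ?_
  obtain ⟨x, -, ms, hms, hx⟩ := tendsto_subseq_of_bounded hu fun j => mem_range_self (ns j)
  have hfx : f x = y := hy x (hx.mapClusterPt.of_comp (hns.comp hms.tendsto_atTop))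
  exact ⟨ms, hfx ▸ (hf.tendsto x).comp hx⟩

theorem exists_mapClusterPt_of_isBounded {X : Type*} [PseudoMetricSpace X] [ProperSpace X]
    {u : ℕ → X} (hu : IsBounded (range u)) : ∃ x, MapClusterPt x atTop u := by
  obtain ⟨x, -, φ, hφ, hx⟩ := tendsto_subseq_of_bounded hu mem_range_self
  exact ⟨x, hx.mapClusterPt.of_comp hφ.tendsto_atTop⟩

theorem apply_self_eq_of_mapClusterPt {E F : Type*} [NormedAddCommGroup E] [TopologicalSpace F]
    [T2Space F] {G : E → E → F} (hG : Continuous fun p : E × E => G p.1 p.2) {u : ℕ → E}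
    (hstep : Tendsto (fun k => u (k + 1) - u k) atTop (𝓝 0)) {c : F}
    (hGu : Tendsto (fun k => G (u k) (u (k + 1))) atTop (𝓝 c)) {x : E}
    (hx : MapClusterPt x atTop u) : G x x = c := by
  obtain ⟨θ, hθ, hux⟩ := subseq_tendsto_of_neBot hx
  have hux' : Tendsto (fun j => u (θ j + 1)) atTop (𝓝 x) := by
    simpa using (hstep.comp hθ.tendsto_atTop).add hux
  exact tendsto_nhds_unique ((hG.tendsto (x, x)).comp (hux.prodMk_nhds hux'))
    (hGu.comp hθ.tendsto_atTop)

theorem tendsto_succ_sub_of_scheme {E : Type*} [NormedAddCommGroup E] [NormedSpace ℝ E]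
    {u g : ℕ → E} {τ : ℕ → ℝ} (hg : Tendsto g atTop (𝓝 0)) {τmax : ℝ} (hτ : ∀ k, ‖τ k‖ ≤ τmax)
    (hscheme : ∀ k, u (k + 1) = u k - τ k • g k) :
    Tendsto (fun k => u (k + 1) - u k) atTop (𝓝 0) := by
  have hsmul := ((isBoundedUnder_of ⟨τmax, hτ⟩).smul_tendsto_zero hg).neg
  rw [neg_zero] at hsmul
  exact hsmul.congr fun k => by rw [hscheme k]; abel

section DiscreteGradientScheme

variable {E : Type*} [NormedAddCommGroup E] [InnerProductSpace ℝ E] {V : E → ℝ}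
  {DG : E → E → E} {u : ℕ → E} {τ : ℕ → ℝ}

theorem sub_eq_neg_mul_norm_sq_of_step (hDG : ∀ x y, ⟪DG x y, y - x⟫ = V y - V x) {x y : E}
    {t : ℝ} (hstep : y = x - t • DG x y) : V y - V x = -(t * ‖DG x y‖ ^ 2) := by
  have hdiff : y - x = -(t • DG x y) := by rw [sub_eq_iff_eq_add', ← sub_eq_add_neg]; exact hstep
  rw [← hDG, hdiff, inner_neg_right, real_inner_smul_right, real_inner_self_eq_norm_sq]

theorem energy_antitone_of_scheme (hDG : ∀ x y, ⟪DG x y, y - x⟫ = V y - V x)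
    (hτ : ∀ k, 0 ≤ τ k) (hscheme : ∀ k, u (k + 1) = u k - τ k • DG (u k) (u (k + 1))) :
    Antitone (V ∘ u) :=
  antitone_nat_of_succ_le fun k => by
    show V (u (k + 1)) ≤ V (u k)
    have := sub_eq_neg_mul_norm_sq_of_step hDG (hscheme k)
    nlinarith [mul_nonneg (hτ k) (sq_nonneg ‖DG (u k) (u (k + 1))‖)]

theorem tendsto_discreteGradient_of_scheme (hDG : ∀ x y, ⟪DG x y, y - x⟫ = V y - V x)
    (hVbd : BddBelow (range (V ∘ u))) {τmin : ℝ} (hτmin : 0 < τmin) (hτ : ∀ k, τmin ≤ τ k)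
    (hscheme : ∀ k, u (k + 1) = u k - τ k • DG (u k) (u (k + 1))) :
    Tendsto (fun k => DG (u k) (u (k + 1))) atTop (𝓝 0) := by
  have hdecr := tendsto_sub_succ_of_antitone
    (energy_antitone_of_scheme hDG (fun k => hτmin.le.trans (hτ k)) hscheme) hVbd
  have hsq : Tendsto (fun k => ‖DG (u k) (u (k + 1))‖ ^ 2) atTop (𝓝 0) := by
    refine squeeze_zero (fun k => sq_nonneg _) (fun k => ?_) (by simpa using hdecr.div_const τmin)
    have := sub_eq_neg_mul_norm_sq_of_step hDG (hscheme k)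
    rw [le_div_iff₀ hτmin]
    nlinarith [mul_le_mul_of_nonneg_right (hτ k) (sq_nonneg ‖DG (u k) (u (k + 1))‖)]
  rw [tendsto_zero_iff_norm_tendsto_zero]
  simpa [Real.sqrt_sq (norm_nonneg _)] using hsq.sqrt

end DiscreteGradientScheme

theorem discrete_gradient_optimization_convergence_general
    {n : ℕ} (V : EuclideanSpace ℝ (Fin n) → ℝ)
    (hVbd : BddBelow (Set.range V))
    (hcoercive : ∀ u : ℕ → EuclideanSpace ℝ (Fin n),
      Filter.Tendsto (fun k => ‖u k‖) Filter.atTop Filter.atTop →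
      Filter.Tendsto (fun k => V (u k)) Filter.atTop Filter.atTop)
    (DG : EuclideanSpace ℝ (Fin n) → EuclideanSpace ℝ (Fin n) → EuclideanSpace ℝ (Fin n))
    (hDGcont : Continuous (fun p : EuclideanSpace ℝ (Fin n) × EuclideanSpace ℝ (Fin n) =>
      DG p.1 p.2))
    (hDG : ∀ u v : EuclideanSpace ℝ (Fin n), ⟪DG u v, v - u⟫ = V v - V u)
    (hDGdiag : ∀ u : EuclideanSpace ℝ (Fin n), DG u u = gradient V u)
    (u : ℕ → EuclideanSpace ℝ (Fin n)) (τ : ℕ → ℝ) (τmin τmax : ℝ) (hτmin : 0 < τmin)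
    (hτ : ∀ k, τmin ≤ τ k ∧ τ k ≤ τmax)
    (hscheme : ∀ k, u (k + 1) = u k - τ k • DG (u k) (u (k + 1))) :
    Filter.Tendsto (fun k => DG (u k) (u (k + 1))) Filter.atTop (nhds 0) ∧
    Filter.Tendsto (fun k => gradient V (u k)) Filter.atTop (nhds 0) ∧
    (∃ ustar : EuclideanSpace ℝ (Fin n), MapClusterPt ustar Filter.atTop u) ∧
    (∀ ustar : EuclideanSpace ℝ (Fin n), MapClusterPt ustar Filter.atTop u →
      gradient V ustar = 0) := by
  have hτpos : ∀ k, 0 ≤ τ k := fun k => hτmin.le.trans (hτ k).1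
  have hDGu := tendsto_discreteGradient_of_scheme hDG (hVbd.mono (range_comp_subset_range u V))
    hτmin (fun k => (hτ k).1) hscheme
  have hstep := tendsto_succ_sub_of_scheme hDGu
    (fun k => (Real.norm_of_nonneg (hτpos k)).trans_le (hτ k).2) hscheme
  have hbdd : IsBounded (range u) := by
    have hanti := energy_antitone_of_scheme hDG hτpos hscheme
    exact isBounded_range_of_coercive hcoercive
      ⟨V (u 0), forall_mem_range.2 fun k => hanti (Nat.zero_le k)⟩
  have hcrit : ∀ x, MapClusterPt x atTop u → gradient V x = 0 := fun x hx =>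
    hDGdiag x ▸ apply_self_eq_of_mapClusterPt hDGcont hstep hDGu hx
  have hgrad : gradient V = fun x => DG x x := funext fun x => (hDGdiag x).symm
  have hgrad_cont : Continuous (gradient V) :=
    hgrad ▸ hDGcont.comp (continuous_id.prodMk continuous_id)
  exact ⟨hDGu, tendsto_comp_of_forall_mapClusterPt hbdd hgrad_cont hcrit,
    exists_mapClusterPt_of_isBounded hbdd, hcrit⟩

/-- **Convergence of the discrete gradient optimization scheme (Theorem 3.4,
Euclidean instance `M = ℝⁿ`).** For `V : ℝⁿ → ℝ` continuously differentiable,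
bounded below and coercive, and `∇̄V` a continuous discrete gradient of `V`,
the iterates of `u^{k+1} = uᵏ − τ_k ∇̄V(uᵏ, u^{k+1})` with
`0 < τ_min ≤ τ_k ≤ τ_max` satisfy `∇̄V(uᵏ,u^{k+1}) → 0`, `∇V(uᵏ) → 0`, the
sequence has an accumulation point, and every accumulation point `u*`
satisfies `∇V(u*) = 0`. -/
theorem discrete_gradient_optimization_convergence
    {n : ℕ} (V : EuclideanSpace ℝ (Fin n) → ℝ)
    (hV : ContDiff ℝ 1 V)
    (hVbd : BddBelow (Set.range V))
    (hcoercive : ∀ u : ℕ → EuclideanSpace ℝ (Fin n),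
      Filter.Tendsto (fun k => ‖u k‖) Filter.atTop Filter.atTop →
      Filter.Tendsto (fun k => V (u k)) Filter.atTop Filter.atTop)
    (DG : EuclideanSpace ℝ (Fin n) → EuclideanSpace ℝ (Fin n) → EuclideanSpace ℝ (Fin n))
    (hDGcont : Continuous (fun p : EuclideanSpace ℝ (Fin n) × EuclideanSpace ℝ (Fin n) =>
      DG p.1 p.2))
    (hDG : ∀ u v : EuclideanSpace ℝ (Fin n), ⟪DG u v, v - u⟫ = V v - V u)
    (hDGdiag : ∀ u : EuclideanSpace ℝ (Fin n), DG u u = gradient V u)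
    (u : ℕ → EuclideanSpace ℝ (Fin n)) (τ : ℕ → ℝ) (τmin τmax : ℝ) (hτmin : 0 < τmin)
    (hτ : ∀ k, τmin ≤ τ k ∧ τ k ≤ τmax)
    (hscheme : ∀ k, u (k + 1) = u k - τ k • DG (u k) (u (k + 1))) :
    Filter.Tendsto (fun k => DG (u k) (u (k + 1))) Filter.atTop (nhds 0) ∧
    Filter.Tendsto (fun k => gradient V (u k)) Filter.atTop (nhds 0) ∧
    (∃ ustar : EuclideanSpace ℝ (Fin n), MapClusterPt ustar Filter.atTop u) ∧
    (∀ ustar : EuclideanSpace ℝ (Fin n), MapClusterPt ustar Filter.atTop u →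
      gradient V ustar = 0) :=
  discrete_gradient_optimization_convergence_general V hVbd hcoercive DG hDGcont hDG hDGdiag u τ
    τmin τmax hτmin hτ hscheme
end
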